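/- arXiv:2603.14474 — 5 statements merged into one kernel-verified Lean document; each statement's English description precedes it below -/
import Mathlib

section
/- Let Φ be a real m×N matrix, let s ≥ 1 be an integer, and let δ ≥ 0 be such that Φ satisfies the restricted isometry property of order 2s with constant δ. Set ρ = (√2 + 1)·δ and assume ρ < 1. Let f ∈ ℝ^N, let η ≥ 0, and let b ∈ ℝ^m satisfy ‖Φf − b‖₂ ≤ η. Let f⋆ ∈ ℝ^N be any vector satisfying ‖Φf⋆ − b‖₂ ≤ η and ‖f⋆‖₁ ≤ ‖f‖₁. Then ‖f⋆ − f‖₂ ≤ C·s^(−1/2)·σ_s(f)₁ + 2C·η, where C = 2(1+ρ)/(1−ρ). -/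
open Finset

namespace CS

noncomputable def l2 {k : ℕ} (x : Fin k → ℝ) : ℝ := Real.sqrt (∑ i, x i ^ 2)

def res {k : ℕ} (S : Finset (Fin k)) (x : Fin k → ℝ) : Fin k → ℝ :=
  fun i => if i ∈ S then x i else 0

variable {k : ℕ}

lemma sumsq_nonneg (x : Fin k → ℝ) : 0 ≤ ∑ i, x i ^ 2 :=
  Finset.sum_nonneg fun _ _ => sq_nonneg _

lemma l2_nonneg (x : Fin k → ℝ) : 0 ≤ l2 x := Real.sqrt_nonneg _

lemma l2_sq (x : Fin k → ℝ) : l2 x ^ 2 = ∑ i, x i ^ 2 :=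
  Real.sq_sqrt (sumsq_nonneg x)

lemma ip_le (x y : Fin k → ℝ) : |∑ i, x i * y i| ≤ l2 x * l2 y := by
  have h2 : (∑ i, x i * y i)^2 ≤ (l2 x * l2 y)^2 := by
    rw [mul_pow, l2_sq, l2_sq]; exact Finset.sum_mul_sq_le_sq_mul_sq univ x y
  exact abs_le.2 (abs_le_of_sq_le_sq' h2 (mul_nonneg (l2_nonneg x) (l2_nonneg y)))

lemma ip_le' (x y : Fin k → ℝ) : ∑ i, x i * y i ≤ l2 x * l2 y :=
  le_trans (le_abs_self _) (ip_le x y)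

lemma l2_le_l2 {x y : Fin k → ℝ} (h : ∀ i, x i ^ 2 ≤ y i ^ 2) : l2 x ≤ l2 y :=
  Real.sqrt_le_sqrt (Finset.sum_le_sum fun i _ => h i)

lemma l2_add_le (x y : Fin k → ℝ) : l2 (fun i => x i + y i) ≤ l2 x + l2 y := by
  have h : ∑ i, (x i + y i)^2 ≤ (l2 x + l2 y)^2 := by
    have e : ∑ i, (x i + y i)^2 = (∑ i, x i ^2) + 2 * (∑ i, x i * y i) + ∑ i, y i ^2 := by
      simp only [add_sq]
      rw [Finset.sum_add_distrib, Finset.sum_add_distrib, Finset.mul_sum]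
      congr 2
      apply Finset.sum_congr rfl; intro i _; ring
    rw [e, add_sq, l2_sq, l2_sq]
    nlinarith [ip_le' x y]
  calc l2 (fun i => x i + y i) ≤ Real.sqrt ((l2 x + l2 y)^2) := Real.sqrt_le_sqrt h
    _ = l2 x + l2 y := Real.sqrt_sq (add_nonneg (l2_nonneg x) (l2_nonneg y))

lemma l2_sum_le {ι : Type*} (t : Finset ι) (g : ι → Fin k → ℝ) :
    l2 (fun i => ∑ j ∈ t, g j i) ≤ ∑ j ∈ t, l2 (g j) := by
  classical
  refine Finset.induction_on t ?_ ?_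
  · simp [l2]
  · intro a t' ha ih
    rw [Finset.sum_insert ha]
    refine le_trans (le_trans (le_of_eq ?_) (l2_add_le (g a) (fun i => ∑ j ∈ t', g j i))) ?_
    · congr 1; funext i; rw [Finset.sum_insert ha]
    · exact add_le_add_right ih _

lemma sum_res_sq (S : Finset (Fin k)) (x : Fin k → ℝ) :
    ∑ i, (res S x i) ^ 2 = ∑ i ∈ S, x i ^ 2 := by
  rw [← Finset.sum_subset (Finset.subset_univ S) (fun i _ hi => by simp [res, hi])]
  apply Finset.sum_congr rfl; intro i hi; simp [res, hi]

lemma l2_res_mono {S T : Finset (Fin k)} (h : S ⊆ T) (x : Fin k → ℝ) :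
    l2 (res S x) ≤ l2 (res T x) := by
  unfold l2; rw [sum_res_sq, sum_res_sq]
  exact Real.sqrt_le_sqrt (Finset.sum_le_sum_of_subset_of_nonneg h (fun i _ _ => sq_nonneg _))

lemma l1_le_sqrt_card (S : Finset (Fin k)) (x : Fin k → ℝ) :
    ∑ i ∈ S, |x i| ≤ Real.sqrt (S.card) * l2 (res S x) := by
  have h := Finset.sum_mul_sq_le_sq_mul_sq S (fun _ => (1:ℝ)) (fun i => |x i|)
  simp only [one_pow, one_mul, Finset.sum_const, nsmul_eq_mul, mul_one, sq_abs] at h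
  have h2 : (∑ i ∈ S, |x i|)^2 ≤ (Real.sqrt (S.card) * l2 (res S x))^2 := by
    rw [mul_pow, Real.sq_sqrt (Nat.cast_nonneg _), l2_sq, sum_res_sq]
    exact h
  have := abs_le_of_sq_le_sq' h2 (mul_nonneg (Real.sqrt_nonneg _) (l2_nonneg _))
  exact this.2

lemma res_union_add {S T : Finset (Fin k)} (h : Disjoint S T) (x : Fin k → ℝ) :
    res (S ∪ T) x = fun i => res S x i + res T x i := by
  funext i
  by_cases hiS : i ∈ S
  · have hiT : i ∉ T := Finset.disjoint_left.mp h hiS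
    simp [res, hiS, hiT]
  · by_cases hiT : i ∈ T <;> simp [res, hiS, hiT]

-- existence of a "top-k" subset with pointwise maximality
lemma exists_pick (h : Fin k → ℝ) (R : Finset (Fin k)) (c : ℕ) (hc : c ≤ R.card) :
    ∃ T, T ⊆ R ∧ T.card = c ∧ ∀ a ∈ R, a ∉ T → ∀ b ∈ T, |h a| ≤ |h b| := by
  classical
  obtain ⟨T0, hT0R, hT0c⟩ := Finset.exists_subset_card_eq hc
  have hne : (Finset.powersetCard c R).Nonempty :=
    ⟨T0, Finset.mem_powersetCard.mpr ⟨hT0R, hT0c⟩⟩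
  obtain ⟨T, hT, hmax⟩ := Finset.exists_max_image (Finset.powersetCard c R)
    (fun T => ∑ i ∈ T, |h i|) hne
  rw [Finset.mem_powersetCard] at hT
  refine ⟨T, hT.1, hT.2, ?_⟩
  intro a haR haT b hbT
  by_contra hlt
  push_neg at hlt
  set T' := insert a (T.erase b) with hT'
  have haE : a ∉ T.erase b := fun hmem => haT (Finset.mem_of_mem_erase hmem)
  have hcard : T'.card = c := by
    have h1 : 1 ≤ c := hT.2 ▸ Finset.card_pos.mpr ⟨b, hbT⟩
    rw [hT', Finset.card_insert_of_notMem haE, Finset.card_erase_of_mem hbT, hT.2]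
    omega
  have hsub : T' ⊆ R := by
    intro i hi
    rw [hT', Finset.mem_insert] at hi
    rcases hi with rfl | hi
    · exact haR
    · exact hT.1 (Finset.mem_of_mem_erase hi)
  have hsum : ∑ i ∈ T, |h i| < ∑ i ∈ T', |h i| := by
    rw [hT', Finset.sum_insert haE, Finset.sum_erase_eq_sub hbT]
    linarith
  exact absurd (hmax T' (Finset.mem_powersetCard.mpr ⟨hsub, hcard⟩)) (not_le.mpr hsum)

noncomputable def pick (h : Fin k → ℝ) (s : ℕ) (R : Finset (Fin k)) : Finset (Fin k) :=
  (exists_pick h R (min s R.card) (min_le_right _ _)).choose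

lemma pick_subset (h : Fin k → ℝ) (s : ℕ) (R : Finset (Fin k)) : pick h s R ⊆ R :=
  (exists_pick h R (min s R.card) (min_le_right _ _)).choose_spec.1

lemma pick_card (h : Fin k → ℝ) (s : ℕ) (R : Finset (Fin k)) :
    (pick h s R).card = min s R.card :=
  (exists_pick h R (min s R.card) (min_le_right _ _)).choose_spec.2.1

lemma pick_max (h : Fin k → ℝ) (s : ℕ) (R : Finset (Fin k)) :
    ∀ a ∈ R, a ∉ pick h s R → ∀ b ∈ pick h s R, |h a| ≤ |h b| :=
  (exists_pick h R (min s R.card) (min_le_right _ _)).choose_spec.2.2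

noncomputable def rest (h : Fin k → ℝ) (s : ℕ) (Sc : Finset (Fin k)) : ℕ → Finset (Fin k)
  | 0 => Sc
  | j+1 => rest h s Sc j \ pick h s (rest h s Sc j)

noncomputable def blk (h : Fin k → ℝ) (s : ℕ) (Sc : Finset (Fin k)) (j : ℕ) : Finset (Fin k) :=
  pick h s (rest h s Sc j)

variable (h : Fin k → ℝ) (s : ℕ) (Sc : Finset (Fin k))

lemma blk_subset_rest (j : ℕ) : blk h s Sc j ⊆ rest h s Sc j := pick_subset _ _ _

lemma rest_succ (j : ℕ) : rest h s Sc (j+1) = rest h s Sc j \ blk h s Sc j := rfl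

lemma rest_subset_rest {i j : ℕ} (hij : i ≤ j) : rest h s Sc j ⊆ rest h s Sc i := by
  induction j with
  | zero => have : i = 0 := Nat.le_zero.mp hij; subst this; exact Finset.Subset.refl _
  | succ j ih =>
    rcases Nat.lt_or_ge i (j+1) with hlt | hge
    · exact (Finset.sdiff_subset).trans (ih (Nat.lt_succ_iff.mp hlt))
    · have : i = j + 1 := Nat.le_antisymm hij hge
      subst this; exact Finset.Subset.refl _

lemma blk_card_le (j : ℕ) : (blk h s Sc j).card ≤ s := by
  rw [blk, pick_card]; exact min_le_left _ _

lemma blk_subset_Sc (j : ℕ) : blk h s Sc j ⊆ Sc :=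
  (blk_subset_rest h s Sc j).trans (rest_subset_rest h s Sc (Nat.zero_le j))

lemma blk_disjoint {i j : ℕ} (hij : i < j) : Disjoint (blk h s Sc i) (blk h s Sc j) := by
  have h1 : blk h s Sc j ⊆ rest h s Sc (i+1) :=
    (blk_subset_rest h s Sc j).trans (rest_subset_rest h s Sc hij)
  rw [rest_succ] at h1
  exact Finset.disjoint_left.mpr fun a ha1 ha2 =>
    (Finset.mem_sdiff.mp (h1 ha2)).2 ha1

lemma rest_card_succ (j : ℕ) :
    (rest h s Sc (j+1)).card = (rest h s Sc j).card - min s (rest h s Sc j).card := by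
  rw [rest_succ, Finset.card_sdiff_of_subset (blk_subset_rest h s Sc j), blk, pick_card]

lemma blk_full (hs : 1 ≤ s) (j : ℕ) (hne : (blk h s Sc (j+1)).Nonempty) :
    (blk h s Sc j).card = s := by
  have h1 : (rest h s Sc (j+1)).Nonempty := hne.mono (blk_subset_rest h s Sc (j+1))
  have h2 := rest_card_succ h s Sc j
  have h3 : 0 < (rest h s Sc (j+1)).card := Finset.card_pos.mpr h1
  rw [blk, pick_card]
  rcases Nat.le_total s (rest h s Sc j).card with hle | hle
  · exact min_eq_left hle
  · exfalso; rw [min_eq_right hle] at h2; omega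

lemma blk_chain (j : ℕ) : ∀ a ∈ blk h s Sc (j+1), ∀ b ∈ blk h s Sc j, |h a| ≤ |h b| := by
  intro a ha b hb
  have h1 : a ∈ rest h s Sc (j+1) := blk_subset_rest h s Sc (j+1) ha
  rw [rest_succ, Finset.mem_sdiff] at h1
  exact pick_max h s (rest h s Sc j) a h1.1 h1.2 b hb

lemma rest_card_le (hs : 1 ≤ s) (j : ℕ) : (rest h s Sc j).card ≤ Sc.card - j := by
  induction j with
  | zero => simp [rest]
  | succ j ih =>
    have h2 := rest_card_succ h s Sc j
    by_cases hne : (rest h s Sc j).Nonempty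
    · have h4 : 0 < (rest h s Sc j).card := Finset.card_pos.mpr hne
      have h5 : 1 ≤ min s (rest h s Sc j).card := le_min hs h4
      have h6 : (rest h s Sc (j+1)).card ≤ (rest h s Sc j).card - 1 := by
        rw [h2]; exact Nat.sub_le_sub_left h5 _
      omega
    · rw [Finset.not_nonempty_iff_eq_empty] at hne
      have h7 : rest h s Sc (j+1) = ∅ := by rw [rest_succ, hne]; exact Finset.empty_sdiff _
      rw [h7]; simp

lemma rest_eq_sdiff (j : ℕ) :
    rest h s Sc j = Sc \ (Finset.range j).biUnion (blk h s Sc) := by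
  induction j with
  | zero => simp [rest]
  | succ j ih =>
    rw [rest_succ, ih, Finset.range_add_one, Finset.biUnion_insert]
    ext a
    simp only [Finset.mem_sdiff, Finset.mem_union]
    tauto

lemma Sc_eq_biUnion (hs : 1 ≤ s) :
    Sc = (Finset.range Sc.card).biUnion (blk h s Sc) := by
  have h1 : rest h s Sc Sc.card = ∅ := by
    have h0 := rest_card_le h s Sc hs Sc.card
    have : (rest h s Sc Sc.card).card = 0 := by omega
    exact Finset.card_eq_zero.mp this
  have h2 := (rest_eq_sdiff h s Sc Sc.card).symm
  rw [h1] at h2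
  have h3 : (Finset.range Sc.card).biUnion (blk h s Sc) ⊆ Sc :=
    Finset.biUnion_subset.mpr fun j _ => blk_subset_Sc h s Sc j
  rw [Finset.sdiff_eq_empty_iff_subset] at h2
  exact Finset.Subset.antisymm h2 h3

lemma l2_res_empty (x : Fin k → ℝ) : l2 (res (∅ : Finset (Fin k)) x) = 0 := by
  unfold l2; rw [sum_res_sq]; simp

lemma per_block (hs : 1 ≤ s) (j : ℕ) :
    Real.sqrt s * l2 (res (blk h s Sc (j+1)) h) ≤ ∑ i ∈ blk h s Sc j, |h i| := by
  by_cases hne : (blk h s Sc (j+1)).Nonempty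
  · have hcard := blk_full h s Sc hs j hne
    set Sj := ∑ i ∈ blk h s Sc j, |h i| with hSj
    have hSj0 : 0 ≤ Sj := Finset.sum_nonneg fun i _ => abs_nonneg _
    have hs0 : (0:ℝ) < s := by exact_mod_cast hs
    have hpt : ∀ a ∈ blk h s Sc (j+1), (h a)^2 ≤ (Sj / s)^2 := by
      intro a ha
      have h1 : (blk h s Sc j).card • |h a| ≤ Sj :=
        Finset.card_nsmul_le_sum _ _ _ (fun b hb => blk_chain h s Sc j a ha b hb)
      rw [hcard, nsmul_eq_mul] at h1
      have h2 : |h a| ≤ Sj / s := by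
        rw [le_div_iff₀ hs0]; linarith [h1]
      calc (h a)^2 = |h a|^2 := (sq_abs _).symm
        _ ≤ (Sj / s)^2 := by
            apply sq_le_sq' _ h2
            linarith [abs_nonneg (h a)]
    have hsum : ∑ i, (res (blk h s Sc (j+1)) h i)^2 ≤ Sj^2 / s := by
      rw [sum_res_sq]
      calc ∑ i ∈ blk h s Sc (j+1), h i ^2
          ≤ ∑ i ∈ blk h s Sc (j+1), (Sj / s)^2 := Finset.sum_le_sum hpt
        _ = (blk h s Sc (j+1)).card * (Sj/s)^2 := by
            rw [Finset.sum_const, nsmul_eq_mul]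
        _ ≤ s * (Sj/s)^2 := by
            apply mul_le_mul_of_nonneg_right _ (sq_nonneg _)
            exact_mod_cast blk_card_le h s Sc (j+1)
        _ = Sj^2 / s := by field_simp
    have hl2 : l2 (res (blk h s Sc (j+1)) h) ≤ Sj / Real.sqrt s := by
      unfold l2
      rw [show Sj / Real.sqrt s = Real.sqrt (Sj^2 / s) by
        rw [Real.sqrt_div (sq_nonneg Sj), Real.sqrt_sq hSj0]]
      exact Real.sqrt_le_sqrt hsum
    rw [mul_comm]
    calc l2 (res (blk h s Sc (j+1)) h) * Real.sqrt s ≤ (Sj / Real.sqrt s) * Real.sqrt s := by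
          apply mul_le_mul_of_nonneg_right hl2 (Real.sqrt_nonneg _)
      _ = Sj := by
          field_simp
  · rw [Finset.not_nonempty_iff_eq_empty] at hne
    rw [hne, l2_res_empty, mul_zero]
    exact Finset.sum_nonneg fun i _ => abs_nonneg _

lemma tail_bound (hs : 1 ≤ s) (K : ℕ) (hK : Sc = (Finset.range K).biUnion (blk h s Sc)) :
    Real.sqrt s * ∑ j ∈ Finset.Ico 1 K, l2 (res (blk h s Sc j) h) ≤ ∑ i ∈ Sc, |h i| := by
  rw [Finset.mul_sum]
  have h1 : ∑ j ∈ Finset.Ico 1 K, Real.sqrt s * l2 (res (blk h s Sc j) h)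
      ≤ ∑ j ∈ Finset.Ico 1 K, ∑ i ∈ blk h s Sc (j-1), |h i| := by
    apply Finset.sum_le_sum
    intro j hj
    have hj1 : 1 ≤ j := (Finset.mem_Ico.mp hj).1
    have : j = (j-1) + 1 := by omega
    rw [this]
    simpa using per_block h s Sc hs (j-1)
  refine h1.trans ?_
  have h2 : ∑ j ∈ Finset.Ico 1 K, ∑ i ∈ blk h s Sc (j-1), |h i|
      = ∑ j ∈ Finset.range (K-1), ∑ i ∈ blk h s Sc j, |h i| := by
    rw [Finset.sum_Ico_eq_sum_range]
    apply Finset.sum_congr rfl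
    intro i _
    have e : 1 + i - 1 = i := by omega
    rw [e]
  have hd : Set.PairwiseDisjoint ↑(Finset.range K) (blk h s Sc) := by
    intro i _ j _ hij
    rcases Nat.lt_or_ge i j with hlt | hge
    · exact blk_disjoint h s Sc hlt
    · exact (blk_disjoint h s Sc (by omega)).symm
  have h3 : ∑ i ∈ Sc, |h i| = ∑ j ∈ Finset.range K, ∑ i ∈ blk h s Sc j, |h i| := by
    conv_lhs => rw [hK]
    exact Finset.sum_biUnion hd
  rw [h2, h3]
  apply Finset.sum_le_sum_of_subset_of_nonneg
  · intro j hj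
    simp only [Finset.mem_range] at *
    omega
  · intro i _ _
    exact Finset.sum_nonneg fun a _ => abs_nonneg _

lemma mulVec_apply' {m : ℕ} (Φ : Matrix (Fin m) (Fin k) ℝ) (x : Fin k → ℝ) (j : Fin m) :
    Φ.mulVec x j = ∑ i, Φ j i * x i := by simp [Matrix.mulVec, dotProduct]

lemma mulVec_pointwise_add {m : ℕ} (Φ : Matrix (Fin m) (Fin k) ℝ) (x y : Fin k → ℝ) (j : Fin m) :
    Φ.mulVec (fun i => x i + y i) j = Φ.mulVec x j + Φ.mulVec y j := by
  simp only [mulVec_apply', mul_add, Finset.sum_add_distrib]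

lemma mulVec_pointwise_sub {m : ℕ} (Φ : Matrix (Fin m) (Fin k) ℝ) (x y : Fin k → ℝ) (j : Fin m) :
    Φ.mulVec (fun i => x i - y i) j = Φ.mulVec x j - Φ.mulVec y j := by
  simp only [mulVec_apply', mul_sub, Finset.sum_sub_distrib]

lemma mulVec_pointwise_smul {m : ℕ} (Φ : Matrix (Fin m) (Fin k) ℝ) (c : ℝ) (x : Fin k → ℝ) (j : Fin m) :
    Φ.mulVec (fun i => c * x i) j = c * Φ.mulVec x j := by
  simp only [mulVec_apply', Finset.mul_sum]
  apply Finset.sum_congr rfl; intro i _; ring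

section RIP

variable {m : ℕ} (mm s : ℕ) (Φ : Matrix (Fin m) (Fin k) ℝ) (δ : ℝ)

lemma rip_polar (hδ : 0 ≤ δ)
    (hRIP : ∀ x : Fin k → ℝ, (Function.support x).ncard ≤ 2 * s →
      (1 - δ) * ∑ i, (x i) ^ 2 ≤ ∑ j, (Φ.mulVec x j) ^ 2 ∧
      ∑ j, (Φ.mulVec x j) ^ 2 ≤ (1 + δ) * ∑ i, (x i) ^ 2)
    (u v : Fin k → ℝ) (hd : ∀ i, u i * v i = 0)
    (hsupp : (Function.support u ∪ Function.support v).ncard ≤ 2 * s) :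
    |∑ j, Φ.mulVec u j * Φ.mulVec v j| ≤ δ * ((∑ i, u i ^ 2) + ∑ i, v i ^ 2) / 2 := by
  have hsp : ∀ (w : Fin k → ℝ), Function.support w ⊆ Function.support u ∪ Function.support v →
      (Function.support w).ncard ≤ 2 * s :=
    fun w hw => le_trans (Set.ncard_le_ncard hw (Set.toFinite _)) hsupp
  have hsub1 : Function.support (fun i => u i + v i) ⊆ Function.support u ∪ Function.support v := by
    intro i hi
    simp only [Function.mem_support, Set.mem_union] at *
    by_contra hc
    push_neg at hc
    exact hi (by rw [hc.1, hc.2, add_zero])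
  have hsub2 : Function.support (fun i => u i - v i) ⊆ Function.support u ∪ Function.support v := by
    intro i hi
    simp only [Function.mem_support, Set.mem_union] at *
    by_contra hc
    push_neg at hc
    exact hi (by rw [hc.1, hc.2, sub_zero])
  have hplus := hRIP _ (hsp _ hsub1)
  have hminus := hRIP _ (hsp _ hsub2)
  have eplus : ∑ i, (u i + v i)^2 = (∑ i, u i ^2) + ∑ i, v i ^2 := by
    rw [← Finset.sum_add_distrib]
    apply Finset.sum_congr rfl; intro i _
    have := hd i; nlinarith [hd i]
  have eminus : ∑ i, (u i - v i)^2 = (∑ i, u i ^2) + ∑ i, v i ^2 := by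
    rw [← Finset.sum_add_distrib]
    apply Finset.sum_congr rfl; intro i _
    have := hd i; nlinarith [hd i]
  have eAplus : ∑ j, (Φ.mulVec (fun i => u i + v i) j)^2
      = (∑ j, (Φ.mulVec u j)^2) + 2 * (∑ j, Φ.mulVec u j * Φ.mulVec v j) + ∑ j, (Φ.mulVec v j)^2 := by
    simp only [mulVec_pointwise_add]
    rw [Finset.mul_sum, ← Finset.sum_add_distrib, ← Finset.sum_add_distrib]
    apply Finset.sum_congr rfl; intro j _; ring
  have eAminus : ∑ j, (Φ.mulVec (fun i => u i - v i) j)^2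
      = (∑ j, (Φ.mulVec u j)^2) - 2 * (∑ j, Φ.mulVec u j * Φ.mulVec v j) + ∑ j, (Φ.mulVec v j)^2 := by
    simp only [mulVec_pointwise_sub]
    rw [Finset.mul_sum, ← Finset.sum_sub_distrib]
    rw [← Finset.sum_add_distrib]
    apply Finset.sum_congr rfl; intro j _; ring
  rw [eplus] at hplus
  rw [eminus] at hminus
  rw [eAplus] at hplus
  rw [eAminus] at hminus
  have hA1 := hRIP u (hsp u Set.subset_union_left)
  have hA2 := hRIP v (hsp v Set.subset_union_right)
  rw [abs_le]
  constructor <;> nlinarith [hplus.1, hplus.2, hminus.1, hminus.2]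

lemma rip_ortho (hδ : 0 ≤ δ)
    (hRIP : ∀ x : Fin k → ℝ, (Function.support x).ncard ≤ 2 * s →
      (1 - δ) * ∑ i, (x i) ^ 2 ≤ ∑ j, (Φ.mulVec x j) ^ 2 ∧
      ∑ j, (Φ.mulVec x j) ^ 2 ≤ (1 + δ) * ∑ i, (x i) ^ 2)
    (u v : Fin k → ℝ) (hd : ∀ i, u i * v i = 0)
    (hsupp : (Function.support u ∪ Function.support v).ncard ≤ 2 * s) :
    |∑ j, Φ.mulVec u j * Φ.mulVec v j| ≤ δ * (l2 u * l2 v) := by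
  by_cases hu : l2 u = 0
  · have hu0 : ∀ i, u i = 0 := by
      intro i
      have h0 : ∑ i, u i ^2 = 0 := by
        have := l2_sq u; rw [hu] at this; simpa using this.symm
      have := (Finset.sum_eq_zero_iff_of_nonneg (fun i _ => sq_nonneg (u i))).mp h0 i (Finset.mem_univ i)
      exact pow_eq_zero_iff (n := 2) (by norm_num) |>.mp this
    have : ∀ j, Φ.mulVec u j = 0 := by
      intro j; rw [mulVec_apply']
      apply Finset.sum_eq_zero; intro i _; rw [hu0 i, mul_zero]
    have hz : ∑ j, Φ.mulVec u j * Φ.mulVec v j = 0 :=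
      Finset.sum_eq_zero fun j _ => by rw [this j, zero_mul]
    rw [hz, abs_zero]
    exact mul_nonneg hδ (mul_nonneg (l2_nonneg u) (l2_nonneg v))
  · by_cases hv : l2 v = 0
    · have hv0 : ∀ i, v i = 0 := by
        intro i
        have h0 : ∑ i, v i ^2 = 0 := by
          have := l2_sq v; rw [hv] at this; simpa using this.symm
        have := (Finset.sum_eq_zero_iff_of_nonneg (fun i _ => sq_nonneg (v i))).mp h0 i (Finset.mem_univ i)
        exact pow_eq_zero_iff (n := 2) (by norm_num) |>.mp this
      have hz : ∑ j, Φ.mulVec u j * Φ.mulVec v j = 0 := by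
        apply Finset.sum_eq_zero; intro j _
        have : Φ.mulVec v j = 0 := by
          rw [mulVec_apply']
          apply Finset.sum_eq_zero; intro i _; rw [hv0 i, mul_zero]
        rw [this, mul_zero]
      rw [hz, abs_zero]
      exact mul_nonneg hδ (mul_nonneg (l2_nonneg u) (l2_nonneg v))
    · set a := l2 u with ha
      set b := l2 v with hb
      have ha0 : 0 < a := lt_of_le_of_ne (l2_nonneg u) (Ne.symm hu)
      have hb0 : 0 < b := lt_of_le_of_ne (l2_nonneg v) (Ne.symm hv)
      set c := Real.sqrt (b / a) with hc
      have hc0 : 0 < c := Real.sqrt_pos.mpr (div_pos hb0 ha0)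
      have hc2 : c^2 = b / a := Real.sq_sqrt (le_of_lt (div_pos hb0 ha0))
      set u' := fun i => c * u i with hu'
      set v' := fun i => c⁻¹ * v i with hv'
      have hd' : ∀ i, u' i * v' i = 0 := by
        intro i
        have : u' i * v' i = (c * c⁻¹) * (u i * v i) := by rw [hu', hv']; ring
        rw [this, hd i, mul_zero]
      have hsupp' : (Function.support u' ∪ Function.support v').ncard ≤ 2 * s := by
        refine le_trans (Set.ncard_le_ncard ?_ (Set.toFinite _)) hsupp
        apply Set.union_subset_union
        · intro i hi
          simp only [Function.mem_support, hu'] at *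
          exact fun h0 => hi (by rw [h0, mul_zero])
        · intro i hi
          simp only [Function.mem_support, hv'] at *
          exact fun h0 => hi (by rw [h0, mul_zero])
      have hkey := rip_polar s Φ δ hδ hRIP u' v' hd' hsupp'
      have hip : ∑ j, Φ.mulVec u' j * Φ.mulVec v' j = ∑ j, Φ.mulVec u j * Φ.mulVec v j := by
        apply Finset.sum_congr rfl; intro j _
        rw [hu', hv', mulVec_pointwise_smul, mulVec_pointwise_smul]
        field_simp
      have hsu : ∑ i, u' i ^2 = c^2 * ∑ i, u i ^2 := by
        rw [Finset.mul_sum]; apply Finset.sum_congr rfl; intro i _; rw [hu']; ring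
      have hsv : ∑ i, v' i ^2 = (c^2)⁻¹ * ∑ i, v i ^2 := by
        rw [Finset.mul_sum]; apply Finset.sum_congr rfl; intro i _; rw [hv']
        rw [mul_pow, inv_pow]
      have hgoal : δ * ((∑ i, u' i ^2) + ∑ i, v' i ^2) / 2 = δ * (a * b) := by
        rw [hsu, hsv, hc2]
        have e1 : (∑ i, u i ^2) = a^2 := (l2_sq u).symm
        have e2 : (∑ i, v i ^2) = b^2 := (l2_sq v).symm
        rw [e1, e2]
        field_simp
        ring
      rw [hip, hgoal] at hkey
      exact hkey

end RIP

lemma supp_res (S : Finset (Fin k)) (x : Fin k → ℝ) :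
    Function.support (res S x) ⊆ ↑S := by
  intro i hi
  by_cases his : i ∈ S
  · exact his
  · exfalso; apply hi; simp [res, his]

lemma ncard_supp_res (S : Finset (Fin k)) (x : Fin k → ℝ) :
    (Function.support (res S x)).ncard ≤ S.card := by
  refine le_trans (Set.ncard_le_ncard (supp_res S x) (Set.toFinite _)) ?_
  rw [Set.ncard_coe_finset]

lemma supp_union_res {S T : Finset (Fin k)} (x y : Fin k → ℝ) :
    (Function.support (res S x) ∪ Function.support (res T y)).ncard ≤ S.card + T.card := by
  have h1 : Function.support (res S x) ∪ Function.support (res T y) ⊆ ↑(S ∪ T) := by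
    rw [Finset.coe_union]
    exact Set.union_subset_union (supp_res S x) (supp_res T y)
  refine le_trans (Set.ncard_le_ncard h1 (Set.toFinite _)) ?_
  rw [Set.ncard_coe_finset]
  exact Finset.card_union_le S T

lemma res_mul_res {S T : Finset (Fin k)} (hST : Disjoint S T) (x y : Fin k → ℝ) (i : Fin k) :
    res S x i * res T y i = 0 := by
  by_cases hiS : i ∈ S
  · have hiT : i ∉ T := Finset.disjoint_left.mp hST hiS
    simp [res, hiT]
  · simp [res, hiS]

lemma mulVec_pointwise_sum {m : ℕ} (Φ : Matrix (Fin m) (Fin k) ℝ) {ι : Type*} (t : Finset ι)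
    (g : ι → Fin k → ℝ) (j : Fin m) :
    Φ.mulVec (fun i => ∑ a ∈ t, g a i) j = ∑ a ∈ t, Φ.mulVec (g a) j := by
  simp only [mulVec_apply', Finset.mul_sum]
  rw [Finset.sum_comm]

section Arith

lemma arith_pq {p q X s2 : ℝ} (hp : 0 ≤ p) (hq : 0 ≤ q) (hpq : p^2 + q^2 = X^2)
    (hs2 : s2^2 = 2) (hs2' : 0 ≤ s2) (hX : 0 ≤ X) : p + q ≤ s2 * X := by
  have hsq : (p + q)^2 ≤ (s2 * X)^2 := by
    rw [mul_pow, hs2]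
    nlinarith [sq_nonneg (p - q)]
  exact (abs_le_of_sq_le_sq' hsq (mul_nonneg hs2' hX)).2

lemma arith_div {X R δ : ℝ} (hX : 0 < X) (hkey : (1 - δ) * X^2 ≤ R * X) :
    (1 - δ) * X ≤ R := by
  nlinarith [hkey, hX]

lemma arith_step1 {su X ρ G η s2 δ σ' Sig2 Sigc T0h : ℝ}
    (hXb : (1 - δ) * X ≤ G * (2 * η) + s2 * δ * Sig2)
    (hρδ : ρ = s2 * δ + δ) (hsu : 0 < su)
    (hF1 : su * Sig2 ≤ Sigc) (hF2 : Sigc ≤ T0h + 2 * σ') (hF3 : T0h ≤ su * X)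
    (hs2δ : 0 ≤ s2 * δ) :
    su * X * (1 - ρ) ≤ 2 * G * (su * η) + 2 * s2 * δ * σ' := by
  have hD := mul_le_mul_of_nonneg_left hXb (le_of_lt hsu)
  have hB' := mul_le_mul_of_nonneg_left hF1 hs2δ
  have hC' := mul_le_mul_of_nonneg_left hF2 hs2δ
  have hF3' := mul_le_mul_of_nonneg_left hF3 hs2δ
  subst hρδ
  nlinarith [hD, hB', hC', hF3']

lemma arith_A' {su L X Sig2 Sigc T0h σ' : ℝ}
    (hL : L ≤ X + Sig2) (hsu : 0 < su)
    (hF1 : su * Sig2 ≤ Sigc) (hF2 : Sigc ≤ T0h + 2 * σ') (hF3 : T0h ≤ su * X) :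
    su * L ≤ 2 * (su * X) + 2 * σ' := by
  have h1 := mul_le_mul_of_nonneg_left hL (le_of_lt hsu)
  nlinarith [hF1, hF2, hF3]

lemma arith_step2 {su L X ρ G η s2 δ σ' σ : ℝ}
    (hstep1 : su * X * (1 - ρ) ≤ 2 * G * (su * η) + 2 * s2 * δ * σ')
    (hA' : su * L ≤ 2 * (su * X) + 2 * σ')
    (hρδ : ρ = s2 * δ + δ) (h1ρ : 0 < 1 - ρ) (hsu : 0 < su) (hη : 0 ≤ η)
    (hG : 0 ≤ G) (hG1ρ : G ≤ 1 + ρ) (hσ'σ : σ' ≤ σ) (hσ'0 : 0 ≤ σ')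
    (hδ : 0 ≤ δ) (hs2 : 1 ≤ s2) :
    (1 - ρ) * (su * L) ≤ 2 * (1 + ρ) * σ + 4 * (1 + ρ) * (su * η) := by
  have hσ0 : 0 ≤ σ := le_trans hσ'0 hσ'σ
  have h1 := mul_le_mul_of_nonneg_left hA' (le_of_lt h1ρ)
  have hsuη : 0 ≤ su * η := mul_nonneg (le_of_lt hsu) hη
  have h2 : 4 * G * (su * η) ≤ 4 * (1 + ρ) * (su * η) := by
    apply mul_le_mul_of_nonneg_right _ hsuη
    linarith
  have hco : 0 ≤ 2 + 2 * s2 * δ - 2 * δ := by nlinarith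
  have h3 : (2 + 2 * s2 * δ - 2 * δ) * σ' ≤ 2 * (1 + ρ) * σ := by
    calc (2 + 2 * s2 * δ - 2 * δ) * σ' ≤ (2 + 2 * s2 * δ - 2 * δ) * σ :=
          mul_le_mul_of_nonneg_left hσ'σ hco
      _ ≤ 2 * (1 + ρ) * σ := by
          apply mul_le_mul_of_nonneg_right _ hσ0
          subst hρδ; nlinarith
  subst hρδ
  nlinarith [hstep1, h1, h2, h3]

lemma arith_G {δ ρ s2 : ℝ} (hδ : 0 ≤ δ) (hδρ : δ ≤ ρ) (hρ0 : 0 ≤ ρ) :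
    Real.sqrt (1 + δ) ≤ 1 + ρ := by
  have h1 : (1:ℝ) + δ ≤ (1 + ρ)^2 := by nlinarith
  calc Real.sqrt (1 + δ) ≤ Real.sqrt ((1 + ρ)^2) := Real.sqrt_le_sqrt h1
    _ = 1 + ρ := Real.sqrt_sq (by linarith)

end Arith

end CS

open scoped BigOperators

set_option maxHeartbeats 2000000 in
/-- ℓ2 error bound for ℓ1-minimization recovery under the RIP
(compressive sensing error bound, Proposition 2.1 / Candès). -/
theorem stmt_0 (m N s : ℕ) (hs : 1 ≤ s)
    (Φ : Matrix (Fin m) (Fin N) ℝ) (δ : ℝ) (hδ : 0 ≤ δ)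
    (hRIP : ∀ x : Fin N → ℝ, (Function.support x).ncard ≤ 2 * s →
      (1 - δ) * ∑ i, (x i) ^ 2 ≤ ∑ j, (Φ.mulVec x j) ^ 2 ∧
      ∑ j, (Φ.mulVec x j) ^ 2 ≤ (1 + δ) * ∑ i, (x i) ^ 2)
    (ρ : ℝ) (hρdef : ρ = (Real.sqrt 2 + 1) * δ) (hρ : ρ < 1)
    (f : Fin N → ℝ) (η : ℝ) (hη : 0 ≤ η) (b : Fin m → ℝ)
    (hb : Real.sqrt (∑ j, (Φ.mulVec f j - b j) ^ 2) ≤ η)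
    (fstar : Fin N → ℝ)
    (hfstarb : Real.sqrt (∑ j, (Φ.mulVec fstar j - b j) ^ 2) ≤ η)
    (hl1 : ∑ i, |fstar i| ≤ ∑ i, |f i|)
    (C : ℝ) (hC : C = 2 * (1 + ρ) / (1 - ρ)) :
    Real.sqrt (∑ i, (fstar i - f i) ^ 2) ≤
      C * (s : ℝ) ^ (-(1 / 2 : ℝ)) *
        sInf {t : ℝ | ∃ z : Fin N → ℝ,
          (Function.support z).ncard ≤ s ∧ t = ∑ i, |f i - z i|}
      + 2 * C * η := by
  classical
  -- basic numeric facts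
  set s2 := Real.sqrt 2 with hs2def
  have hs2sq : s2 ^ 2 = 2 := Real.sq_sqrt (by norm_num)
  have hs2ge1 : 1 ≤ s2 := by
    rw [hs2def, show (1:ℝ) = Real.sqrt 1 by rw [Real.sqrt_one]]
    exact Real.sqrt_le_sqrt (by norm_num)
  have hρ0 : 0 ≤ ρ := by rw [hρdef]; positivity
  have hρδ : ρ = s2 * δ + δ := by rw [hρdef, hs2def]; ring
  have hδρ : δ ≤ ρ := by nlinarith
  have h1ρ : (0:ℝ) < 1 - ρ := by linarith
  have hδ1 : δ < 1 := by linarith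
  have hCnn : 0 ≤ C := by
    rw [hC]; positivity
  have hCkey : (1 - ρ) * C = 2 * (1 + ρ) := by
    rw [hC]; field_simp
  set u := (s : ℝ) ^ (-(1 / 2 : ℝ)) with hudef
  set su := Real.sqrt s with hsudef
  have hsu1 : 1 ≤ su := by
    rw [hsudef, show (1:ℝ) = Real.sqrt 1 by rw [Real.sqrt_one]]
    exact Real.sqrt_le_sqrt (by exact_mod_cast hs)
  have hsu0 : (0:ℝ) < su := lt_of_lt_of_le one_pos hsu1
  have hsuu : su * u = 1 := by
    rw [hudef, hsudef, Real.rpow_neg (Nat.cast_nonneg s), Real.sqrt_eq_rpow]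
    exact mul_inv_cancel₀ (by
      rw [← Real.sqrt_eq_rpow]
      exact ne_of_gt (by rw [← hsudef]; exact hsu0))
  have hu0 : 0 ≤ u := by rw [hudef]; positivity
  -- h and T0
  set h : Fin N → ℝ := fun i => fstar i - f i with hhdef
  have hcardU : min s N ≤ (Finset.univ : Finset (Fin N)).card := by
    simp [Finset.card_univ]
  obtain ⟨T0, hT0sub, hT0card, hT0max⟩ := CS.exists_pick f Finset.univ (min s N) hcardU
  have hT0s : T0.card ≤ s := by rw [hT0card]; exact min_le_left _ _
  set Sc := T0ᶜ with hScdef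
  -- best s-term approximation bound
  have hT0best : ∀ S : Finset (Fin N), S.card ≤ s → ∑ i ∈ S, |f i| ≤ ∑ i ∈ T0, |f i| := by
    intro S hS
    have hScard : S.card ≤ T0.card := by
      rw [hT0card]
      exact le_min hS (le_trans (Finset.card_le_univ S) (by simp))
    have hd1 : (S \ T0).card ≤ (T0 \ S).card := by
      have e1 := Finset.card_sdiff_add_card_inter S T0
      have e2 := Finset.card_sdiff_add_card_inter T0 S
      rw [Finset.inter_comm] at e2
      omega
    have hsum : ∑ i ∈ S \ T0, |f i| ≤ ∑ i ∈ T0 \ S, |f i| := by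
      rcases Finset.eq_empty_or_nonempty (S \ T0) with he | hne
      · rw [he, Finset.sum_empty]
        exact Finset.sum_nonneg fun i _ => abs_nonneg _
      · have hne2 : (T0 \ S).Nonempty := by
          have hc1 : 0 < (S \ T0).card := Finset.card_pos.mpr hne
          exact Finset.card_pos.mp (by omega)
        obtain ⟨b0, hb0, hb0min⟩ := Finset.exists_min_image (T0 \ S) (fun i => |f i|) hne2
        have hstep1 : ∑ i ∈ S \ T0, |f i| ≤ (S \ T0).card • |f b0| := by
          apply Finset.sum_le_card_nsmul
          intro a ha
          have haT0 : a ∉ T0 := (Finset.mem_sdiff.mp ha).2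
          exact hT0max a (Finset.mem_univ a) haT0 b0 (Finset.mem_sdiff.mp hb0).1
        have hstep2 : (T0 \ S).card • |f b0| ≤ ∑ i ∈ T0 \ S, |f i| :=
          Finset.card_nsmul_le_sum _ _ _ (fun i hi => hb0min i hi)
        have hstep15 : (S \ T0).card • |f b0| ≤ (T0 \ S).card • |f b0| := by
          rw [nsmul_eq_mul, nsmul_eq_mul]
          apply mul_le_mul_of_nonneg_right _ (abs_nonneg _)
          exact_mod_cast hd1
        linarith
    have e1 := Finset.sum_inter_add_sum_sdiff S T0 (fun i => |f i|)
    have e2 := Finset.sum_inter_add_sum_sdiff T0 S (fun i => |f i|)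
    rw [Finset.inter_comm] at e2
    linarith
  -- the infimum
  set σ := sInf {t : ℝ | ∃ z : Fin N → ℝ,
      (Function.support z).ncard ≤ s ∧ t = ∑ i, |f i - z i|} with hσdef
  set σ' := ∑ i ∈ Sc, |f i| with hσ'def
  have hσ'0 : 0 ≤ σ' := Finset.sum_nonneg fun i _ => abs_nonneg _
  have hSne : {t : ℝ | ∃ z : Fin N → ℝ,
      (Function.support z).ncard ≤ s ∧ t = ∑ i, |f i - z i|}.Nonempty := by
    refine ⟨∑ i, |f i - CS.res T0 f i|, CS.res T0 f, ?_, rfl⟩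
    exact le_trans (CS.ncard_supp_res T0 f) hT0s
  have hσ'σ : σ' ≤ σ := by
    apply le_csInf hSne
    intro t ht
    obtain ⟨z, hz, rfl⟩ := ht
    set Z := (Function.support z).toFinset with hZdef
    have hZcard : Z.card ≤ s := by
      rw [hZdef, ← Set.ncard_eq_toFinset_card']
      exact hz
    have h1 : ∑ i ∈ Zᶜ, |f i| ≤ ∑ i, |f i - z i| := by
      have h2 : ∑ i ∈ Zᶜ, |f i| = ∑ i ∈ Zᶜ, |f i - z i| := by
        apply Finset.sum_congr rfl
        intro i hi
        have hiZ : i ∉ Z := Finset.mem_compl.mp hi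
        have : z i = 0 := by
          by_contra hc
          exact hiZ (by rw [hZdef]; exact Set.mem_toFinset.mpr hc)
        rw [this, sub_zero]
      rw [h2]
      exact Finset.sum_le_sum_of_subset_of_nonneg (Finset.subset_univ _)
        (fun i _ _ => abs_nonneg _)
    have h3 : σ' ≤ ∑ i ∈ Zᶜ, |f i| := by
      have e1 := Finset.sum_add_sum_compl Z (fun i => |f i|)
      have e2 := Finset.sum_add_sum_compl T0 (fun i => |f i|)
      have := hT0best Z hZcard
      rw [hσ'def, hScdef]
      linarith
    linarith
  -- blocks
  have hSc : Sc = (Finset.range Sc.card).biUnion (CS.blk h s Sc) := CS.Sc_eq_biUnion h s Sc hs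
  set K := Sc.card with hKdef
  set B := CS.blk h s Sc with hBdef
  have hBsubSc : ∀ a, B a ⊆ Sc := fun a => CS.blk_subset_Sc h s Sc a
  have hBdisj : ∀ {a c : ℕ}, a ≠ c → Disjoint (B a) (B c) := by
    intro a c hac
    rcases Nat.lt_or_ge a c with hlt | hge
    · exact CS.blk_disjoint h s Sc hlt
    · exact (CS.blk_disjoint h s Sc (by omega)).symm
  have hT0B : ∀ a, Disjoint T0 (B a) := by
    intro a
    refine Finset.disjoint_left.mpr fun x hx1 hx2 => ?_
    have hxSc := hBsubSc a hx2
    rw [hScdef] at hxSc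
    exact (Finset.mem_compl.mp hxSc) hx1
  have hBcard : ∀ a, (B a).card ≤ s := fun a => CS.blk_card_le h s Sc a
  set h01 := CS.res (T0 ∪ B 0) h with h01def
  set X := CS.l2 h01 with hXdef
  have hX0 : 0 ≤ X := CS.l2_nonneg _
  set Sig2 := ∑ a ∈ Finset.Ico 1 K, CS.l2 (CS.res (B a) h) with hSig2def
  have hSig20 : 0 ≤ Sig2 := Finset.sum_nonneg fun a _ => CS.l2_nonneg _
  set Sigc := ∑ i ∈ Sc, |h i| with hSigcdef
  -- decomposition of h
  have hdecomp : ∀ i, h i = h01 i + ∑ a ∈ Finset.Ico 1 K, CS.res (B a) h i := by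
    intro i
    by_cases hiT : i ∈ T0 ∪ B 0
    · have h1 : h01 i = h i := by rw [h01def]; simp [CS.res, hiT]
      have h2 : ∑ a ∈ Finset.Ico 1 K, CS.res (B a) h i = 0 := by
        apply Finset.sum_eq_zero
        intro a ha
        have ha1 : 1 ≤ a := (Finset.mem_Ico.mp ha).1
        have hiBa : i ∉ B a := by
          intro hiBa
          rcases Finset.mem_union.mp hiT with hT | hB0
          · exact Finset.disjoint_left.mp (hT0B a) hT hiBa
          · exact Finset.disjoint_left.mp (hBdisj (by omega : (0:ℕ) ≠ a)) hB0 hiBa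
        simp [CS.res, hiBa]
      rw [h1, h2, add_zero]
    · have h1 : h01 i = 0 := by rw [h01def]; simp [CS.res, hiT]
      have hiT0 : i ∉ T0 := fun hc => hiT (Finset.mem_union_left _ hc)
      have hiSc : i ∈ Sc := Finset.mem_compl.mpr hiT0
      rw [hSc] at hiSc
      obtain ⟨a0, ha0K, ha0⟩ := Finset.mem_biUnion.mp hiSc
      have ha01 : 1 ≤ a0 := by
        rcases Nat.eq_zero_or_pos a0 with rfl | hp
        · exact absurd (Finset.mem_union_right T0 ha0) hiT
        · exact hp
      rw [h1, zero_add, Finset.sum_eq_single a0]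
      · simp [CS.res, ha0]
      · intro c _ hca
        have hiBc : i ∉ B c := fun hc =>
          Finset.disjoint_left.mp (hBdisj hca) hc ha0
        simp [CS.res, hiBc]
      · intro hnot
        exact absurd (Finset.mem_Ico.mpr ⟨ha01, Finset.mem_range.mp ha0K⟩) hnot
  -- F1: tail bound
  have hF1 : su * Sig2 ≤ Sigc := by
    rw [hsudef, hSig2def, hSigcdef, hBdef]
    exact CS.tail_bound h s Sc hs K (hKdef ▸ hSc)
  -- F2: cone constraint
  have hF2 : Sigc ≤ (∑ i ∈ T0, |h i|) + 2 * σ' := by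
    have habs1 : ∀ i ∈ T0, |f i| - |h i| ≤ |fstar i| := by
      intro i _
      have e : fstar i = f i + h i := by rw [hhdef]; ring
      rw [e]
      have := abs_sub_abs_le_abs_sub (f i) (-(h i))
      simp only [abs_neg, sub_neg_eq_add] at this
      linarith
    have habs2 : ∀ i ∈ Sc, |h i| - |f i| ≤ |fstar i| := by
      intro i _
      have e : fstar i = f i + h i := by rw [hhdef]; ring
      rw [e]
      have := abs_sub_abs_le_abs_sub (h i) (-(f i))
      simp only [abs_neg, sub_neg_eq_add] at this
      rw [add_comm] at this
      linarith
    have hb1 : ∑ i ∈ T0, (|f i| - |h i|) ≤ ∑ i ∈ T0, |fstar i| :=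
      Finset.sum_le_sum habs1
    have hb2 : ∑ i ∈ Sc, (|h i| - |f i|) ≤ ∑ i ∈ Sc, |fstar i| :=
      Finset.sum_le_sum habs2
    rw [Finset.sum_sub_distrib] at hb1 hb2
    have e1 := Finset.sum_add_sum_compl T0 (fun i => |fstar i|)
    have e2 := Finset.sum_add_sum_compl T0 (fun i => |f i|)
    rw [← hScdef] at e1 e2
    rw [hSigcdef, hσ'def]
    linarith
  -- F3
  have hF3 : ∑ i ∈ T0, |h i| ≤ su * X := by
    have h1 := CS.l1_le_sqrt_card T0 h
    have h2 : Real.sqrt T0.card ≤ su := by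
      rw [hsudef]
      exact Real.sqrt_le_sqrt (by exact_mod_cast hT0s)
    have h3 : CS.l2 (CS.res T0 h) ≤ X := by
      rw [hXdef, h01def]
      exact CS.l2_res_mono Finset.subset_union_left h
    calc ∑ i ∈ T0, |h i| ≤ Real.sqrt T0.card * CS.l2 (CS.res T0 h) := h1
      _ ≤ su * X := mul_le_mul h2 h3 (CS.l2_nonneg _) (Real.sqrt_nonneg _)
  -- F4 : measurement error
  have hF4 : CS.l2 (fun jj => Φ.mulVec h jj) ≤ 2 * η := by
    have hsplit : (fun jj => Φ.mulVec h jj)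
        = fun jj => (Φ.mulVec fstar jj - b jj) + (-(Φ.mulVec f jj - b jj)) := by
      funext jj
      have e : h = fun i => fstar i - f i := hhdef
      rw [e, CS.mulVec_pointwise_sub]
      ring
    rw [hsplit]
    have ht := CS.l2_add_le (fun jj => Φ.mulVec fstar jj - b jj)
      (fun jj => -(Φ.mulVec f jj - b jj))
    have hneg : CS.l2 (fun jj => -(Φ.mulVec f jj - b jj))
        = CS.l2 (fun jj => Φ.mulVec f jj - b jj) := by
      unfold CS.l2
      congr 1
      apply Finset.sum_congr rfl
      intro jj _
      rw [neg_pow]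
      norm_num
    have h1 : CS.l2 (fun jj => Φ.mulVec fstar jj - b jj) ≤ η := hfstarb
    have h2 : CS.l2 (fun jj => Φ.mulVec f jj - b jj) ≤ η := hb
    rw [hneg] at ht
    calc CS.l2 (fun jj => (Φ.mulVec fstar jj - b jj) + (-(Φ.mulVec f jj - b jj)))
        ≤ CS.l2 (fun jj => Φ.mulVec fstar jj - b jj)
          + CS.l2 (fun jj => Φ.mulVec f jj - b jj) := by
          exact ht
      _ ≤ 2 * η := by linarith
  -- F5: RIP lower bound on h01
  have hcard01 : (T0 ∪ B 0).card ≤ 2 * s := by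
    have := Finset.card_union_le T0 (B 0)
    have := hBcard 0
    omega
  have hsupp01 : (Function.support h01).ncard ≤ 2 * s := by
    rw [h01def]
    exact le_trans (CS.ncard_supp_res _ _) hcard01
  have hRIP01 := hRIP h01 hsupp01
  set Y := ∑ jj, (Φ.mulVec h01 jj) ^ 2 with hYdef
  have hXsq : ∑ i, h01 i ^ 2 = X ^ 2 := by rw [hXdef, CS.l2_sq]
  have hF5 : (1 - δ) * X ^ 2 ≤ Y := by rw [← hXsq]; exact hRIP01.1
  have hYup : Y ≤ (1 + δ) * X ^ 2 := by rw [← hXsq]; exact hRIP01.2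
  have hY0 : 0 ≤ Y := CS.sumsq_nonneg _
  -- F6: decomposition of the inner product
  have hmvh : ∀ jj, Φ.mulVec h jj
      = Φ.mulVec h01 jj + ∑ a ∈ Finset.Ico 1 K, Φ.mulVec (CS.res (B a) h) jj := by
    intro jj
    have e : h = fun i => h01 i + ∑ a ∈ Finset.Ico 1 K, CS.res (B a) h i := funext hdecomp
    calc Φ.mulVec h jj
        = Φ.mulVec (fun i => h01 i + ∑ a ∈ Finset.Ico 1 K, CS.res (B a) h i) jj := by
          rw [← e]
      _ = Φ.mulVec h01 jj + Φ.mulVec (fun i => ∑ a ∈ Finset.Ico 1 K, CS.res (B a) h i) jj :=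
          CS.mulVec_pointwise_add Φ _ _ jj
      _ = _ := by rw [CS.mulVec_pointwise_sum]
  have hF6 : Y = (∑ jj, Φ.mulVec h01 jj * Φ.mulVec h jj)
      - ∑ a ∈ Finset.Ico 1 K, ∑ jj, Φ.mulVec h01 jj * Φ.mulVec (CS.res (B a) h) jj := by
    have e1 : ∑ jj, Φ.mulVec h01 jj * Φ.mulVec h jj
        = Y + ∑ jj, ∑ a ∈ Finset.Ico 1 K, Φ.mulVec h01 jj * Φ.mulVec (CS.res (B a) h) jj := by
      rw [hYdef, ← Finset.sum_add_distrib]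
      apply Finset.sum_congr rfl
      intro jj _
      rw [hmvh jj, mul_add, Finset.mul_sum, sq]
    rw [e1, Finset.sum_comm]
    ring
  -- F7: cross terms
  have hF7 : ∀ a ∈ Finset.Ico 1 K,
      |∑ jj, Φ.mulVec h01 jj * Φ.mulVec (CS.res (B a) h) jj|
        ≤ s2 * δ * (X * CS.l2 (CS.res (B a) h)) := by
    intro a ha
    have ha1 : 1 ≤ a := (Finset.mem_Ico.mp ha).1
    have hdT0B0 : Disjoint T0 (B 0) := hT0B 0
    have hmv01 : ∀ jj, Φ.mulVec h01 jj
        = Φ.mulVec (CS.res T0 h) jj + Φ.mulVec (CS.res (B 0) h) jj := by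
      intro jj
      have e : h01 = fun i => CS.res T0 h i + CS.res (B 0) h i := by
        rw [h01def, CS.res_union_add hdT0B0]
      rw [e]
      exact CS.mulVec_pointwise_add Φ _ _ jj
    have hipsplit : ∑ jj, Φ.mulVec h01 jj * Φ.mulVec (CS.res (B a) h) jj
        = (∑ jj, Φ.mulVec (CS.res T0 h) jj * Φ.mulVec (CS.res (B a) h) jj)
          + ∑ jj, Φ.mulVec (CS.res (B 0) h) jj * Φ.mulVec (CS.res (B a) h) jj := by
      rw [← Finset.sum_add_distrib]
      apply Finset.sum_congr rfl
      intro jj _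
      rw [hmv01 jj]
      ring
    have hc1 : |∑ jj, Φ.mulVec (CS.res T0 h) jj * Φ.mulVec (CS.res (B a) h) jj|
        ≤ δ * (CS.l2 (CS.res T0 h) * CS.l2 (CS.res (B a) h)) := by
      apply CS.rip_ortho s Φ δ hδ hRIP
      · exact CS.res_mul_res (hT0B a) h h
      · refine le_trans (CS.supp_union_res h h) ?_
        have := hBcard a
        omega
    have hc2 : |∑ jj, Φ.mulVec (CS.res (B 0) h) jj * Φ.mulVec (CS.res (B a) h) jj|
        ≤ δ * (CS.l2 (CS.res (B 0) h) * CS.l2 (CS.res (B a) h)) := by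
      apply CS.rip_ortho s Φ δ hδ hRIP
      · exact CS.res_mul_res (hBdisj (by omega : (0:ℕ) ≠ a)) h h
      · refine le_trans (CS.supp_union_res h h) ?_
        have := hBcard 0
        have := hBcard a
        omega
    -- l2 (res T0 h) + l2 (res (B 0) h) ≤ √2 * X
    set p := CS.l2 (CS.res T0 h) with hpdef
    set q := CS.l2 (CS.res (B 0) h) with hqdef
    have hp0 : 0 ≤ p := CS.l2_nonneg _
    have hq0 : 0 ≤ q := CS.l2_nonneg _
    have hpq : p ^ 2 + q ^ 2 = X ^ 2 := by
      rw [hpdef, hqdef, hXdef, CS.l2_sq, CS.l2_sq, CS.l2_sq, h01def,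
        CS.sum_res_sq, CS.sum_res_sq, CS.sum_res_sq]
      exact (Finset.sum_union hdT0B0).symm
    have hpqX : p + q ≤ s2 * X :=
      CS.arith_pq hp0 hq0 hpq hs2sq (by linarith) hX0
    set la := CS.l2 (CS.res (B a) h) with hladef
    have hla0 : 0 ≤ la := CS.l2_nonneg _
    calc |∑ jj, Φ.mulVec h01 jj * Φ.mulVec (CS.res (B a) h) jj|
        ≤ |∑ jj, Φ.mulVec (CS.res T0 h) jj * Φ.mulVec (CS.res (B a) h) jj|
          + |∑ jj, Φ.mulVec (CS.res (B 0) h) jj * Φ.mulVec (CS.res (B a) h) jj| := by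
          rw [hipsplit]; exact abs_add_le _ _
      _ ≤ δ * (p * la) + δ * (q * la) := add_le_add hc1 hc2
      _ = δ * ((p + q) * la) := by ring
      _ ≤ δ * ((s2 * X) * la) := by
          apply mul_le_mul_of_nonneg_left _ hδ
          exact mul_le_mul_of_nonneg_right hpqX hla0
      _ = s2 * δ * (X * la) := by ring
  -- F8: main estimate on X
  have hG := Real.sqrt_nonneg (1 + δ)
  set G := Real.sqrt (1 + δ) with hGdef
  have hGsq : G ^ 2 = 1 + δ := Real.sq_sqrt (by linarith)
  have hG1ρ : G ≤ 1 + ρ := by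
    rw [hGdef]
    exact CS.arith_G (s2 := s2) hδ hδρ hρ0
  have hip1 : ∑ jj, Φ.mulVec h01 jj * Φ.mulVec h jj ≤ G * X * (2 * η) := by
    have hcs := CS.ip_le' (fun jj => Φ.mulVec h01 jj) (fun jj => Φ.mulVec h jj)
    have hl2A01 : CS.l2 (fun jj => Φ.mulVec h01 jj) ≤ G * X := by
      have e : CS.l2 (fun jj => Φ.mulVec h01 jj) = Real.sqrt Y := by
        rw [hYdef]; rfl
      rw [e]
      calc Real.sqrt Y ≤ Real.sqrt ((1 + δ) * X ^ 2) := Real.sqrt_le_sqrt hYup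
        _ = G * X := by
            rw [Real.sqrt_mul (by linarith) (X ^ 2), Real.sqrt_sq hX0, hGdef]
    calc ∑ jj, Φ.mulVec h01 jj * Φ.mulVec h jj
        ≤ CS.l2 (fun jj => Φ.mulVec h01 jj) * CS.l2 (fun jj => Φ.mulVec h jj) := hcs
      _ ≤ (G * X) * (2 * η) := by
          apply mul_le_mul hl2A01 hF4 (CS.l2_nonneg _)
          exact mul_nonneg hG hX0
  have hcross_sum : ∑ a ∈ Finset.Ico 1 K,
      |∑ jj, Φ.mulVec h01 jj * Φ.mulVec (CS.res (B a) h) jj| ≤ s2 * δ * (X * Sig2) := by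
    calc ∑ a ∈ Finset.Ico 1 K, |∑ jj, Φ.mulVec h01 jj * Φ.mulVec (CS.res (B a) h) jj|
        ≤ ∑ a ∈ Finset.Ico 1 K, s2 * δ * (X * CS.l2 (CS.res (B a) h)) :=
          Finset.sum_le_sum hF7
      _ = s2 * δ * (X * Sig2) := by
          rw [hSig2def, Finset.mul_sum, Finset.mul_sum]
  have hXkey : (1 - δ) * X ^ 2 ≤ G * X * (2 * η) + s2 * δ * (X * Sig2) := by
    have h1 : Y ≤ (∑ jj, Φ.mulVec h01 jj * Φ.mulVec h jj)
        + ∑ a ∈ Finset.Ico 1 K, |∑ jj, Φ.mulVec h01 jj * Φ.mulVec (CS.res (B a) h) jj| := by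
      rw [hF6]
      have h2 : - ∑ a ∈ Finset.Ico 1 K, ∑ jj, Φ.mulVec h01 jj * Φ.mulVec (CS.res (B a) h) jj
          ≤ ∑ a ∈ Finset.Ico 1 K, |∑ jj, Φ.mulVec h01 jj * Φ.mulVec (CS.res (B a) h) jj| := by
        rw [← Finset.sum_neg_distrib]
        apply Finset.sum_le_sum
        intro a _
        exact neg_le_abs _
      linarith only [h2]
    linarith only [h1, hF5, hip1, hcross_sum]
  have hXbound : (1 - δ) * X ≤ G * (2 * η) + s2 * δ * Sig2 := by
    rcases eq_or_lt_of_le hX0 with hXz | hXpos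
    · rw [← hXz, mul_zero]
      have hn1 : 0 ≤ s2 * δ * Sig2 := mul_nonneg (mul_nonneg (by linarith) hδ) hSig20
      have hn2 : 0 ≤ G * (2 * η) := mul_nonneg hG (by linarith)
      linarith only [hn1, hn2]
    · refine CS.arith_div hXpos ?_
      calc (1 - δ) * X ^ 2 ≤ G * X * (2 * η) + s2 * δ * (X * Sig2) := hXkey
        _ = (G * (2 * η) + s2 * δ * Sig2) * X := by ring
  -- final triangle inequality
  have hLtri : CS.l2 h ≤ X + Sig2 := by
    have e : h = fun i => h01 i + ∑ a ∈ Finset.Ico 1 K, CS.res (B a) h i := funext hdecomp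
    calc CS.l2 h = CS.l2 (fun i => h01 i + ∑ a ∈ Finset.Ico 1 K, CS.res (B a) h i) := by
          rw [← e]
      _ ≤ CS.l2 h01 + CS.l2 (fun i => ∑ a ∈ Finset.Ico 1 K, CS.res (B a) h i) :=
          CS.l2_add_le _ _
      _ ≤ X + Sig2 := by
          rw [hXdef, hSig2def]
          exact add_le_add_right (CS.l2_sum_le _ _) _
  set L := CS.l2 h with hLdef
  have hL0 : 0 ≤ L := CS.l2_nonneg _
  -- assemble
  have hstep1 : su * X * (1 - ρ) ≤ 2 * G * (su * η) + 2 * s2 * δ * σ' :=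
    CS.arith_step1 hXbound hρδ hsu0 hF1 hF2 hF3 (mul_nonneg (by linarith) hδ)
  have hA' : su * L ≤ 2 * (su * X) + 2 * σ' :=
    CS.arith_A' hLtri hsu0 hF1 hF2 hF3
  have hstep2 : (1 - ρ) * (su * L) ≤ 2 * (1 + ρ) * σ + 4 * (1 + ρ) * (su * η) :=
    CS.arith_step2 hstep1 hA' hρδ h1ρ hsu0 hη hG hG1ρ hσ'σ hσ'0 hδ hs2ge1
  have hfinal : su * L ≤ su * (C * u * σ + 2 * C * η) := by
    have e : (1 - ρ) * (su * (C * u * σ + 2 * C * η))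
        = 2 * (1 + ρ) * σ + 4 * (1 + ρ) * (su * η) := by
      linear_combination (su * u * σ + 2 * su * η) * hCkey + (2 * (1 + ρ) * σ) * hsuu
    have h1 : (1 - ρ) * (su * L) ≤ (1 - ρ) * (su * (C * u * σ + 2 * C * η)) := by
      rw [e]; exact hstep2
    exact le_of_mul_le_mul_left h1 h1ρ
  have hgoal : Real.sqrt (∑ i, (fstar i - f i) ^ 2) = L := rfl
  rw [hgoal]
  have := le_of_mul_le_mul_left hfinal hsu0
  calc L ≤ C * u * σ + 2 * C * η := this
    _ = C * (s:ℝ) ^ (-(1/2 : ℝ)) * σ + 2 * C * η := by rw [hudef]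
end

section
/- Let Φ be an m×N matrix with entries in {0,1} such that every column of Φ contains exactly k ones, for some integer k ≥ 1. Let s be an integer with 1 ≤ s ≤ N, and suppose there exist constants c > 0 and D ≥ 1 such that c·‖Φx‖₂ ≤ ‖x‖₂ ≤ c·D·‖Φx‖₂ for every s-sparse vector x ∈ ℝ^N. Then m ≥ min{ s²/D⁴ , N/D² }. -/
set_option maxHeartbeats 1000000


open scoped BigOperators

/-- lower bound on the number of rows of a 0-1 sparse RIP matrix. -/
theorem stmt_1 (m N k s : ℕ) (hk : 1 ≤ k) (hs1 : 1 ≤ s) (hsN : s ≤ N)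
    (Φ : Matrix (Fin m) (Fin N) ℝ)
    (h01 : ∀ i j, Φ i j = 0 ∨ Φ i j = 1)
    (hcol : ∀ j, ∑ i, Φ i j = (k : ℝ))
    (c D : ℝ) (hc : 0 < c) (hD : 1 ≤ D)
    (hRIP : ∀ x : Fin N → ℝ, (Function.support x).ncard ≤ s →
      c * Real.sqrt (∑ j, (Φ.mulVec x j) ^ 2) ≤ Real.sqrt (∑ i, (x i) ^ 2) ∧
      Real.sqrt (∑ i, (x i) ^ 2) ≤ c * D * Real.sqrt (∑ j, (Φ.mulVec x j) ^ 2)) :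
    min ((s : ℝ) ^ 2 / D ^ 4) ((N : ℝ) / D ^ 2) ≤ (m : ℝ) := by
  have hΦnn : ∀ i j, (0:ℝ) ≤ Φ i j := fun i j => by rcases h01 i j with h|h <;> simp [h]
  have hΦsq : ∀ i j, Φ i j ^ 2 = Φ i j := fun i j => by rcases h01 i j with h|h <;> simp [h]
  have hc2 : (0:ℝ) < c ^ 2 := by positivity
  have hD0 : (0:ℝ) < D := lt_of_lt_of_le one_pos hD
  -- key lemma: RIP applied to indicator of a set T
  have key : ∀ T : Finset (Fin N), T.card ≤ s →
      c ^ 2 * (∑ i, (∑ j ∈ T, Φ i j) ^ 2) ≤ (T.card : ℝ) ∧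
      (T.card : ℝ) ≤ c ^ 2 * D ^ 2 * (∑ i, (∑ j ∈ T, Φ i j) ^ 2) := by
    intro T hT
    set x : Fin N → ℝ := fun j => if j ∈ T then 1 else 0 with hx
    have hsupp : (Function.support x).ncard ≤ s := by
      have hxs : Function.support x = ↑T := by
        ext j; simp [hx, Function.mem_support]
      rw [hxs, Set.ncard_coe_finset]; exact hT
    have hmul : ∀ i, Φ.mulVec x i = ∑ j ∈ T, Φ i j := by
      intro i
      simp [Matrix.mulVec, dotProduct, hx, mul_ite, mul_one, mul_zero,
        Finset.sum_ite_mem, Finset.univ_inter]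
    have hxsq : ∑ i, x i ^ 2 = (T.card : ℝ) := by
      simp [hx, apply_ite (· ^ (2:ℕ)), Finset.sum_ite_mem, Finset.univ_inter]
    obtain ⟨h1, h2⟩ := hRIP x hsupp
    rw [hxsq] at h1 h2
    simp only [hmul] at h1 h2
    set A : ℝ := ∑ i, (∑ j ∈ T, Φ i j) ^ 2 with hA
    have hAnn : 0 ≤ A := Finset.sum_nonneg fun i _ => sq_nonneg _
    have hTnn : (0:ℝ) ≤ (T.card : ℝ) := Nat.cast_nonneg _
    have hsA : Real.sqrt A ^ 2 = A := Real.sq_sqrt hAnn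
    have hsT : Real.sqrt (T.card : ℝ) ^ 2 = (T.card : ℝ) := Real.sq_sqrt hTnn
    have hsAnn : 0 ≤ Real.sqrt A := Real.sqrt_nonneg _
    have hsTnn : 0 ≤ Real.sqrt (T.card : ℝ) := Real.sqrt_nonneg _
    constructor
    · have e1 := pow_le_pow_left₀ (by positivity) h1 2
      rwa [mul_pow, hsA, hsT] at e1
    · have e2 := pow_le_pow_left₀ hsTnn h2 2
      rwa [mul_pow, mul_pow, hsA, hsT] at e2
  -- single column: c^2 * k ≤ 1 ≤ c^2 * D^2 * k
  have hN0 : 0 < N := lt_of_lt_of_le hs1 hsN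
  have j0 : Fin N := ⟨0, hN0⟩
  have hsingle := key {j0} (by simpa using hs1)
  have hAk : (∑ i, (∑ j ∈ ({j0} : Finset (Fin N)), Φ i j) ^ 2) = (k : ℝ) := by
    simp only [Finset.sum_singleton]
    rw [← hcol j0]
    exact Finset.sum_congr rfl fun i _ => hΦsq i j0
  rw [hAk] at hsingle
  obtain ⟨hk1, hk2⟩ := hsingle
  simp only [Finset.card_singleton, Nat.cast_one] at hk1 hk2
  have hk0 : (1:ℝ) ≤ (k:ℝ) := by exact_mod_cast hk
  by_cases hcase : (s : ℝ) ≤ (k : ℝ) * D ^ 2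
  · -- Case A: show s^2 / D^4 ≤ m
    refine le_trans (min_le_left _ _) ?_
    obtain ⟨T, -, hTcard⟩ := Finset.exists_subset_card_eq
      (show s ≤ (Finset.univ : Finset (Fin N)).card by simpa using hsN)
    obtain ⟨hA1, hA2⟩ := key T (le_of_eq hTcard)
    rw [hTcard] at hA1 hA2
    set A : ℝ := ∑ i, (∑ j ∈ T, Φ i j) ^ 2 with hA
    have hrsum : ∑ i, (∑ j ∈ T, Φ i j) = (s : ℝ) * (k : ℝ) := by
      rw [show ∑ i, ∑ j ∈ T, Φ i j = ∑ j ∈ T, ∑ i, Φ i j from Finset.sum_comm]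
      rw [Finset.sum_congr rfl fun j _ => hcol j]
      simp [hTcard, mul_comm]
    have hCS : ((s : ℝ) * (k : ℝ)) ^ 2 ≤ (m : ℝ) * A := by
      have := sq_sum_le_card_mul_sum_sq (s := (Finset.univ : Finset (Fin m)))
        (f := fun i => ∑ j ∈ T, Φ i j)
      rw [hrsum] at this
      simpa using this
    -- A ≤ s * D^2 * k  from c^2 A ≤ s and 1 ≤ c^2 D^2 k
    have hAub : A ≤ (s : ℝ) * D ^ 2 * (k : ℝ) := by
      have hs0 : (0:ℝ) ≤ (s:ℝ) := Nat.cast_nonneg _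
      nlinarith [hA1, hk2, mul_nonneg hs0 (le_of_lt hc2)]
    have hs0 : (1:ℝ) ≤ (s:ℝ) := by exact_mod_cast hs1
    rw [div_le_iff₀ (by positivity)]
    have h3 : ((s:ℝ) * k) ^ 2 ≤ (m:ℝ) * ((s:ℝ) * D ^ 2 * k) :=
      hCS.trans (mul_le_mul_of_nonneg_left hAub (Nat.cast_nonneg m))
    have hsk : (0:ℝ) < (s:ℝ) * k := by nlinarith [hs0, hk0]
    have hmk : (s:ℝ) * k ≤ (m:ℝ) * D ^ 2 := by nlinarith [h3, hsk]
    calc (s:ℝ) ^ 2 ≤ (s:ℝ) * ((k:ℝ) * D ^ 2) := by nlinarith [hcase, hs0]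
      _ = ((s:ℝ) * k) * D ^ 2 := by ring
      _ ≤ ((m:ℝ) * D ^ 2) * D ^ 2 := mul_le_mul_of_nonneg_right hmk (sq_nonneg D)
      _ = (m:ℝ) * D ^ 4 := by ring
  · -- Case B: show N / D^2 ≤ m
    refine le_trans (min_le_right _ _) ?_
    push_neg at hcase
    -- every row has at most k * D^2 ones
    have hrow : ∀ i, (∑ j, Φ i j) ≤ (k : ℝ) * D ^ 2 := by
      intro i
      set F : Finset (Fin N) := Finset.univ.filter (fun j => Φ i j = 1) with hF
      have hrc : ∑ j, Φ i j = (F.card : ℝ) := by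
        rw [← Finset.sum_filter_add_sum_filter_not Finset.univ (fun j => Φ i j = 1)]
        have e1 : ∑ j ∈ F, Φ i j = (F.card : ℝ) := by
          rw [Finset.sum_congr rfl fun j hj => (Finset.mem_filter.1 hj).2]
          simp [hF]
        have e2 : ∑ j ∈ Finset.univ.filter (fun j => ¬ Φ i j = 1), Φ i j = 0 := by
          refine Finset.sum_eq_zero fun j hj => ?_
          rcases h01 i j with h|h
          · exact h
          · exact absurd h (Finset.mem_filter.1 hj).2
        rw [e1, e2, add_zero]
      rw [hrc]
      by_contra hcon
      push_neg at hcon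
      set t : ℕ := min s F.card with ht
      have htk : (k : ℝ) * D ^ 2 < (t : ℝ) := by
        rw [ht, Nat.cast_min]
        exact lt_min hcase hcon
      have hts : t ≤ s := min_le_left _ _
      obtain ⟨T, hTF, hTcard⟩ := Finset.exists_subset_card_eq (min_le_right s F.card)
      have hTt : T.card = t := hTcard.trans ht.symm
      obtain ⟨hB1, -⟩ := key T (hTt ▸ hts)
      rw [hTt] at hB1
      have hrowT : ∑ j ∈ T, Φ i j = (t : ℝ) := by
        rw [Finset.sum_congr rfl fun j hj => (Finset.mem_filter.1 (hTF hj)).2]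
        simp [hTt]
      set B : ℝ := ∑ i', (∑ j ∈ T, Φ i' j) ^ 2 with hBdef
      have hBlb : ((t : ℝ)) ^ 2 ≤ B := by
        rw [← hrowT]
        exact Finset.single_le_sum (f := fun i' => (∑ j ∈ T, Φ i' j) ^ 2)
          (fun i' _ => sq_nonneg _) (Finset.mem_univ i)
      have hB1' : c ^ 2 * B ≤ (t : ℝ) := hB1
      have ht0 : (0:ℝ) < (t:ℝ) := lt_of_le_of_lt (by positivity) htk
      have h5 : c ^ 2 * (t:ℝ) ^ 2 ≤ (t:ℝ) :=
        le_trans (mul_le_mul_of_nonneg_left hBlb hc2.le) hB1'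
      have h6 : c ^ 2 * (t:ℝ) ≤ 1 := by nlinarith [h5, ht0]
      nlinarith [h6, hk2, mul_pos hc2 (sub_pos.2 htk)]
    -- sum over all entries
    have htot : (N : ℝ) * (k : ℝ) ≤ (m : ℝ) * ((k : ℝ) * D ^ 2) := by
      have h1 : ∑ j, ∑ i, Φ i j = (N : ℝ) * (k : ℝ) := by
        rw [Finset.sum_congr rfl fun j _ => hcol j]; simp [mul_comm]
      have h2 : ∑ i, ∑ j, Φ i j ≤ (m : ℝ) * ((k : ℝ) * D ^ 2) := by
        calc ∑ i, ∑ j, Φ i j ≤ ∑ i : Fin m, (k : ℝ) * D ^ 2 :=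
              Finset.sum_le_sum fun i _ => hrow i
          _ = (m : ℝ) * ((k : ℝ) * D ^ 2) := by simp [mul_comm]
      rw [← h1, Finset.sum_comm]; exact h2
    rw [div_le_iff₀ (by positivity)]
    nlinarith [htot, hk0, hD0]
end

section
/- Let A be a real m×N matrix, let s, t ≥ 1 be integers, and let δ ≥ 0 be such that A satisfies the restricted isometry property of order s+t with constant δ. Let u, v ∈ ℝ^N be vectors with at most s and at most t nonzero entries respectively, whose supports are disjoint: supp(u) ∩ supp(v) = ∅. Then |⟨Au, Av⟩| ≤ δ·‖u‖₂·‖v‖₂. -/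
open scoped BigOperators

/-- Auxiliary: parallelogram-type bound. -/
theorem stmt_5_aux (m N s t : ℕ)
    (A : Matrix (Fin m) (Fin N) ℝ) (δ : ℝ)
    (hRIP : ∀ x : Fin N → ℝ, (Function.support x).ncard ≤ s + t →
      (1 - δ) * ∑ i, (x i) ^ 2 ≤ ∑ j, (A.mulVec x j) ^ 2 ∧
      ∑ j, (A.mulVec x j) ^ 2 ≤ (1 + δ) * ∑ i, (x i) ^ 2)
    (u v : Fin N → ℝ)
    (hu : (Function.support u).ncard ≤ s)
    (hv : (Function.support v).ncard ≤ t)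
    (hdisj : Disjoint (Function.support u) (Function.support v)) :
    |∑ j, A.mulVec u j * A.mulVec v j| ≤
      δ / 2 * (∑ i, (u i) ^ 2 + ∑ i, (v i) ^ 2) := by
  have hcross : ∑ i, u i * v i = 0 := by
    apply Finset.sum_eq_zero
    intro i _
    by_cases h : u i = 0
    · simp [h]
    · have hv0 : v i = 0 := by
        by_contra hv0
        exact (Set.disjoint_left.mp hdisj h) hv0
      simp [hv0]
  have hfin : ∀ w : Fin N → ℝ, (Function.support w).Finite :=
    fun w => Set.toFinite _
  have hcard : ∀ w : Fin N → ℝ,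
      Function.support w ⊆ Function.support u ∪ Function.support v →
      (Function.support w).ncard ≤ s + t := by
    intro w hw
    calc (Function.support w).ncard
        ≤ (Function.support u ∪ Function.support v).ncard :=
          Set.ncard_le_ncard hw (Set.toFinite _)
      _ ≤ (Function.support u).ncard + (Function.support v).ncard :=
          Set.ncard_union_le _ _
      _ ≤ s + t := add_le_add hu hv
  obtain ⟨lp, rp⟩ := hRIP (u + v) (hcard _ (Function.support_add u v))
  obtain ⟨lm, rm⟩ := hRIP (u - v) (hcard _ (Function.support_sub u v))
  have qp : ∑ i, ((u + v) i) ^ 2 = ∑ i, (u i) ^ 2 + ∑ i, (v i) ^ 2 := by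
    have : ∀ i, ((u + v) i) ^ 2 = (u i) ^ 2 + (v i) ^ 2 + 2 * (u i * v i) :=
      fun i => by simp [Pi.add_apply]; ring
    simp_rw [this, Finset.sum_add_distrib, ← Finset.mul_sum, hcross]
    ring
  have qm : ∑ i, ((u - v) i) ^ 2 = ∑ i, (u i) ^ 2 + ∑ i, (v i) ^ 2 := by
    have : ∀ i, ((u - v) i) ^ 2 = (u i) ^ 2 + (v i) ^ 2 - 2 * (u i * v i) :=
      fun i => by simp [Pi.sub_apply]; ring
    rw [Finset.sum_congr rfl fun i _ => this i, Finset.sum_sub_distrib,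
      Finset.sum_add_distrib, ← Finset.mul_sum, hcross]
    ring
  have e : ∑ j, (A.mulVec (u + v) j) ^ 2 - ∑ j, (A.mulVec (u - v) j) ^ 2
      = 4 * ∑ j, A.mulVec u j * A.mulVec v j := by
    rw [Matrix.mulVec_add, Matrix.mulVec_sub, ← Finset.sum_sub_distrib,
      Finset.mul_sum]
    apply Finset.sum_congr rfl
    intro j _
    simp [Pi.add_apply, Pi.sub_apply]
    ring
  rw [qp] at lp rp
  rw [qm] at lm rm
  rw [abs_le]
  constructor <;> nlinarith [e, lp, rp, lm, rm]

/-- near-orthogonality of images of disjointly supported sparse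
vectors under an RIP matrix (Lemma of Candès). -/
theorem stmt_5 (m N s t : ℕ) (hs : 1 ≤ s) (ht : 1 ≤ t)
    (A : Matrix (Fin m) (Fin N) ℝ) (δ : ℝ) (hδ : 0 ≤ δ)
    (hRIP : ∀ x : Fin N → ℝ, (Function.support x).ncard ≤ s + t →
      (1 - δ) * ∑ i, (x i) ^ 2 ≤ ∑ j, (A.mulVec x j) ^ 2 ∧
      ∑ j, (A.mulVec x j) ^ 2 ≤ (1 + δ) * ∑ i, (x i) ^ 2)
    (u v : Fin N → ℝ)
    (hu : (Function.support u).ncard ≤ s)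
    (hv : (Function.support v).ncard ≤ t)
    (hdisj : Disjoint (Function.support u) (Function.support v)) :
    |∑ j, A.mulVec u j * A.mulVec v j| ≤
      δ * Real.sqrt (∑ i, (u i) ^ 2) * Real.sqrt (∑ i, (v i) ^ 2) := by
  set a := Real.sqrt (∑ i, (u i) ^ 2) with ha
  set b := Real.sqrt (∑ i, (v i) ^ 2) with hb
  have hsumu : (0:ℝ) ≤ ∑ i, (u i) ^ 2 :=
    Finset.sum_nonneg fun i _ => sq_nonneg _
  have hsumv : (0:ℝ) ≤ ∑ i, (v i) ^ 2 :=
    Finset.sum_nonneg fun i _ => sq_nonneg _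
  have ha2 : a ^ 2 = ∑ i, (u i) ^ 2 := Real.sq_sqrt hsumu
  have hb2 : b ^ 2 = ∑ i, (v i) ^ 2 := Real.sq_sqrt hsumv
  have ha0 : 0 ≤ a := Real.sqrt_nonneg _
  have hb0 : 0 ≤ b := Real.sqrt_nonneg _
  by_cases hau : a = 0
  · -- u = 0
    have hu0 : ∀ i, u i = 0 := by
      intro i
      have : ∑ i, (u i) ^ 2 = 0 := by
        have := ha2; rw [hau] at this; simpa using this.symm
      have := (Finset.sum_eq_zero_iff_of_nonneg
        (fun i _ => sq_nonneg (u i))).mp this i (Finset.mem_univ i)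
      exact pow_eq_zero_iff (by norm_num) |>.mp this
    have : ∀ j, A.mulVec u j = 0 := by
      intro j
      simp [Matrix.mulVec, dotProduct, hu0]
    simp [this, hau]
  by_cases hbv : b = 0
  · have hv0 : ∀ i, v i = 0 := by
      intro i
      have : ∑ i, (v i) ^ 2 = 0 := by
        have := hb2; rw [hbv] at this; simpa using this.symm
      have := (Finset.sum_eq_zero_iff_of_nonneg
        (fun i _ => sq_nonneg (v i))).mp this i (Finset.mem_univ i)
      exact pow_eq_zero_iff (by norm_num) |>.mp this
    have : ∀ j, A.mulVec v j = 0 := by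
      intro j
      simp [Matrix.mulVec, dotProduct, hv0]
    simp [this, hbv]
  -- main case: apply aux to (b • u) and (a • v)
  have hap : 0 < a := lt_of_le_of_ne ha0 (Ne.symm hau)
  have hbp : 0 < b := lt_of_le_of_ne hb0 (Ne.symm hbv)
  have hsu : Function.support (b • u) ⊆ Function.support u :=
    Function.support_const_smul_subset b u
  have hsv : Function.support (a • v) ⊆ Function.support v :=
    Function.support_const_smul_subset a v
  have hu' : (Function.support (b • u)).ncard ≤ s :=
    le_trans (Set.ncard_le_ncard hsu (Set.toFinite _)) hu
  have hv' : (Function.support (a • v)).ncard ≤ t :=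
    le_trans (Set.ncard_le_ncard hsv (Set.toFinite _)) hv
  have hdisj' : Disjoint (Function.support (b • u)) (Function.support (a • v)) :=
    Set.disjoint_of_subset hsu hsv hdisj
  have key := stmt_5_aux m N s t A δ hRIP (b • u) (a • v) hu' hv' hdisj'
  have eL : ∑ j, A.mulVec (b • u) j * A.mulVec (a • v) j
      = (a * b) * ∑ j, A.mulVec u j * A.mulVec v j := by
    rw [Matrix.mulVec_smul, Matrix.mulVec_smul, Finset.mul_sum]
    apply Finset.sum_congr rfl
    intro j _
    simp [Pi.smul_apply, smul_eq_mul]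
    ring
  have eU : ∑ i, ((b • u) i) ^ 2 = b ^ 2 * ∑ i, (u i) ^ 2 := by
    rw [Finset.mul_sum]
    apply Finset.sum_congr rfl
    intro i _
    simp [Pi.smul_apply, smul_eq_mul]
    ring
  have eV : ∑ i, ((a • v) i) ^ 2 = a ^ 2 * ∑ i, (v i) ^ 2 := by
    rw [Finset.mul_sum]
    apply Finset.sum_congr rfl
    intro i _
    simp [Pi.smul_apply, smul_eq_mul]
    ring
  rw [eL, eU, eV, ← ha2, ← hb2] at key
  rw [abs_mul, abs_of_pos (mul_pos hap hbp)] at key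
  have : a * b * |∑ j, A.mulVec u j * A.mulVec v j|
      ≤ a * b * (δ * a * b) := by
    calc a * b * |∑ j, A.mulVec u j * A.mulVec v j|
        ≤ δ / 2 * (b ^ 2 * a ^ 2 + a ^ 2 * b ^ 2) := key
      _ = a * b * (δ * a * b) := by ring
  exact le_of_mul_le_mul_left this (mul_pos hap hbp)
end

section
/- Let h ∈ ℝ^N, let s ≥ 1 be an integer, and let S, T be disjoint sets of indices with |S| = s, |T| ≤ s, such that every entry of h on T is dominated in magnitude by every entry of h on S, i.e., |h_j| ≤ |h_i| for all j ∈ T and i ∈ S. Then ‖h restricted to T‖₂ ≤ s^(−1/2) · ‖h restricted to S‖₁, where 'h restricted to U' denotes the vector that agrees with h on U and is zero elsewhere. -/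
open scoped BigOperators

/-- the ℓ2 norm of the block of smaller entries is bounded by
s^(−1/2) times the ℓ1 norm of the block of larger entries. -/
theorem stmt_7 (N s : ℕ) (hs : 1 ≤ s) (h : Fin N → ℝ)
    (S T : Finset (Fin N)) (hST : Disjoint S T)
    (hScard : S.card = s) (hTcard : T.card ≤ s)
    (hdom : ∀ j ∈ T, ∀ i ∈ S, |h j| ≤ |h i|) :
    Real.sqrt (∑ j ∈ T, (h j) ^ 2) ≤ (s : ℝ) ^ (-(1 / 2 : ℝ)) * ∑ i ∈ S, |h i| := by
  have hs0 : (0 : ℝ) < s := by exact_mod_cast hs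
  set A : ℝ := (∑ i ∈ S, |h i|) / s with hA
  have hA0 : 0 ≤ A := by
    apply div_nonneg _ hs0.le
    exact Finset.sum_nonneg fun i _ => abs_nonneg _
  have key : ∀ j ∈ T, |h j| ≤ A := by
    intro j hj
    rw [hA, le_div_iff₀ hs0]
    calc |h j| * s = ∑ _i ∈ S, |h j| := by
          rw [Finset.sum_const, hScard, nsmul_eq_mul, mul_comm]
      _ ≤ ∑ i ∈ S, |h i| := Finset.sum_le_sum fun i hi => hdom j hj i hi
  have hsum : ∑ j ∈ T, (h j) ^ 2 ≤ (s : ℝ) * A ^ 2 := by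
    calc ∑ j ∈ T, (h j) ^ 2 ≤ ∑ _j ∈ T, A ^ 2 := by
          apply Finset.sum_le_sum
          intro j hj
          rw [← sq_abs]
          exact pow_le_pow_left₀ (abs_nonneg _) (key j hj) 2
      _ = T.card * A ^ 2 := by rw [Finset.sum_const, nsmul_eq_mul]
      _ ≤ (s : ℝ) * A ^ 2 := by
          apply mul_le_mul_of_nonneg_right _ (sq_nonneg _)
          exact_mod_cast hTcard
  have h1 : Real.sqrt (∑ j ∈ T, (h j) ^ 2) ≤ Real.sqrt ((s : ℝ) * A ^ 2) :=
    Real.sqrt_le_sqrt hsum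
  have h2 : Real.sqrt ((s : ℝ) * A ^ 2) = Real.sqrt s * A := by
    rw [Real.sqrt_mul hs0.le, Real.sqrt_sq hA0]
  have hsq : Real.sqrt s ≠ 0 := by positivity
  have hmul : Real.sqrt s * Real.sqrt s = s := Real.mul_self_sqrt hs0.le
  have h3 : (s : ℝ) ^ (-(1 / 2 : ℝ)) * ∑ i ∈ S, |h i| = Real.sqrt s * A := by
    rw [Real.rpow_neg hs0.le, ← Real.sqrt_eq_rpow, hA]
    field_simp
    nlinarith [Finset.sum_nonneg (fun i (_ : i ∈ S) => abs_nonneg (h i))]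
  rw [h3]
  exact h1.trans_eq h2
end

section
/- Let h ∈ ℝ^N, let s ≥ 1 be an integer, let T₀ ⊆ {1,…,N} be an index set, and let T₁ ⊆ T₀ᶜ be a set of s indices such that min_{i ∈ T₁} |h_i| ≥ max_{j ∈ T₀ᶜ \ T₁} |h_j| (i.e., T₁ consists of s largest-magnitude entries of h outside T₀). Then ‖h restricted to T₀ᶜ \ T₁‖₂ ≤ s^(−1/2) · ‖h restricted to T₀ᶜ‖₁. -/
open scoped BigOperators

/-- the ℓ2 norm of the tail outside T₀ ∪ T₁ is bounded by
s^(−1/2) times the ℓ1 norm of h outside T₀, when T₁ collects the s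
largest-magnitude entries outside T₀. -/
theorem stmt_15 (N s : ℕ) (hs : 1 ≤ s) (h : Fin N → ℝ)
    (T₀ T₁ : Finset (Fin N)) (hsub : T₁ ⊆ T₀ᶜ) (hcard : T₁.card = s)
    (hdom : ∀ i ∈ T₁, ∀ j ∈ T₀ᶜ \ T₁, |h j| ≤ |h i|) :
    Real.sqrt (∑ j ∈ T₀ᶜ \ T₁, (h j) ^ 2) ≤
      (s : ℝ) ^ (-(1 / 2 : ℝ)) * ∑ i ∈ T₀ᶜ, |h i| := by
  set A := ∑ i ∈ T₀ᶜ, |h i| with hA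
  have hA0 : 0 ≤ A := Finset.sum_nonneg fun i _ => abs_nonneg _
  have hspos : (0:ℝ) < s := by exact_mod_cast Nat.lt_of_lt_of_le Nat.zero_lt_one hs
  have key : ∀ j ∈ T₀ᶜ \ T₁, |h j| ≤ A / s := by
    intro j hj
    have h1 : (s:ℝ) * |h j| ≤ ∑ i ∈ T₁, |h i| := by
      calc (s:ℝ) * |h j| = ∑ _i ∈ T₁, |h j| := by
            rw [Finset.sum_const, hcard, nsmul_eq_mul]
        _ ≤ ∑ i ∈ T₁, |h i| := Finset.sum_le_sum fun i hi => hdom i hi j hj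
    have h2 : ∑ i ∈ T₁, |h i| ≤ A :=
      Finset.sum_le_sum_of_subset_of_nonneg hsub (fun i _ _ => abs_nonneg _)
    rw [le_div_iff₀ hspos]
    nlinarith
  have hsum : ∑ j ∈ T₀ᶜ \ T₁, (h j)^2 ≤ A^2 / s := by
    have step1 : ∑ j ∈ T₀ᶜ \ T₁, (h j)^2 ≤ ∑ j ∈ T₀ᶜ \ T₁, (A / s) * |h j| := by
      refine Finset.sum_le_sum fun j hj => ?_
      calc (h j)^2 = |h j| * |h j| := by rw [abs_mul_abs_self]; ring
        _ ≤ (A/s) * |h j| := mul_le_mul_of_nonneg_right (key j hj) (abs_nonneg _)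
    have h3 : ∑ j ∈ T₀ᶜ \ T₁, |h j| ≤ A :=
      Finset.sum_le_sum_of_subset_of_nonneg Finset.sdiff_subset (fun i _ _ => abs_nonneg _)
    calc ∑ j ∈ T₀ᶜ \ T₁, (h j)^2 ≤ (A/s) * ∑ j ∈ T₀ᶜ \ T₁, |h j| := by
          rw [Finset.mul_sum]; exact step1
      _ ≤ (A/s) * A := mul_le_mul_of_nonneg_left h3 (by positivity)
      _ = A^2/s := by ring
  calc Real.sqrt (∑ j ∈ T₀ᶜ \ T₁, (h j)^2) ≤ Real.sqrt (A^2/s) := Real.sqrt_le_sqrt hsum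
    _ = (s:ℝ)^(-(1/2:ℝ)) * A := by
        rw [Real.rpow_neg hspos.le, ← Real.sqrt_eq_rpow,
          Real.sqrt_div (sq_nonneg A), Real.sqrt_sq hA0, div_eq_inv_mul]
end
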